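/- arXiv:2209.07876 — 3 statements merged into one kernel-verified Lean document; each statement's English description precedes it below -/
import Mathlib

section
/- Let R be a commutative ring of prime characteristic p and let D, D' : R → R be derivations. Then the commutator [D, D'] = D ∘ D' − D' ∘ D is again a derivation, and moreover the p-fold composition D^p = D ∘ ... ∘ D (p times) is a derivation. -/
/-!
The commutator is Mathlib's Lie bracket of derivations. For `D^p`, the general Leibniz rule
`D^n (a b) = ∑ C(n, i) D^i a D^(n-i) b` leaves, when `n = p`, only the two extreme terms,
because `p ∣ C(p, i)` for `0 < i < p`.
-/

open Finset

namespace Derivation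

variable {R A : Type*} [CommSemiring R] [CommSemiring A] [Algebra R A]

theorem iterate_apply_mul (D : Derivation R A A) (n : ℕ) (a b : A) :
    D^[n] (a * b) = ∑ ij ∈ antidiagonal n, n.choose ij.1 • (D^[ij.1] a * D^[ij.2] b) := by
  induction n with
  | zero => simp
  | succ n ih =>
    rw [sum_antidiagonal_choose_succ_nsmul (fun i j => D^[i] a * D^[j] b) n]
    simp only [Function.iterate_succ_apply', ih, map_sum, map_nsmul, leibniz, smul_eq_mul,
      smul_add, sum_add_distrib]
    congr 1
    refine sum_congr rfl fun ⟨i, j⟩ hij => ?_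
    rw [n.choose_symm_of_eq_add (mem_antidiagonal.1 hij).symm, mul_comm]

theorem iterate_prime_apply_mul (D : Derivation R A A) (p : ℕ) [hp : Fact p.Prime] [CharP A p]
    (a b : A) : D^[p] (a * b) = a * D^[p] b + b * D^[p] a := by
  obtain ⟨n, rfl⟩ := Nat.exists_eq_add_one_of_ne_zero hp.out.ne_zero
  rw [iterate_apply_mul, Nat.sum_antidiagonal_eq_sum_range_succ_mk, sum_range_succ,
    sum_range_succ', sum_eq_zero]
  · simp [add_comm, mul_comm]
  · intro i hi
    have hp_dvd : n + 1 ∣ (n + 1).choose (i + 1) :=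
      hp.out.dvd_choose_self i.succ_ne_zero (by simpa using hi)
    rw [nsmul_eq_mul, (CharP.cast_eq_zero_iff A (n + 1) _).2 hp_dvd, zero_mul]

def iterateChar (D : Derivation R A A) (p : ℕ) [Fact p.Prime] [CharP A p] :
    Derivation R A A where
  toLinearMap := (D : Module.End R A) ^ p
  map_one_eq_zero' := by
    obtain ⟨n, rfl⟩ := Nat.exists_eq_add_one_of_ne_zero (Fact.out : p.Prime).ne_zero
    simp [Module.End.pow_apply, Function.iterate_succ_apply]
  leibniz' a b := by
    simp [Module.End.pow_apply, iterate_prime_apply_mul]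

theorem iterateChar_apply (D : Derivation R A A) (p : ℕ) [Fact p.Prime] [CharP A p] (a : A) :
    D.iterateChar p a = D^[p] a := by
  simp [iterateChar, Module.End.pow_apply]

end Derivation

/-- In a commutative ring of prime characteristic `p`, the commutator of two
derivations is a derivation, and the `p`-fold composition of a derivation with
itself is a derivation. -/
theorem stmt4 {R : Type*} [CommRing R] (p : ℕ) [Fact p.Prime] [CharP R p]
    (D D' : Derivation ℤ R R) :
    (∃ E : Derivation ℤ R R, ∀ x : R, E x = D (D' x) - D' (D x)) ∧
    (∃ E : Derivation ℤ R R, ∀ x : R, E x = (⇑D)^[p] x) :=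
  ⟨⟨⁅D, D'⁆, Derivation.commutator_apply⟩, ⟨D.iterateChar p, D.iterateChar_apply p⟩⟩
end

section
/- Let K ⊆ L be a finite field extension. Then L is separable over K if and only if the module of Kähler differentials Ω_{L/K} is zero. -/
/-- A finite field extension `L/K` is separable iff the module of Kähler
differentials `Ω_{L/K}` vanishes. -/
theorem stmt8 {K L : Type*} [Field K] [Field L] [Algebra K L]
    [FiniteDimensional K L] :
    Algebra.IsSeparable K L ↔ Subsingleton (KaehlerDifferential K L) := by
  rw [← Algebra.formallyUnramified_iff, Algebra.FormallyUnramified.iff_isSeparable]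
end

section
/- Let K ⊆ L be a finite field extension in characteristic p > 0. If L/K is not separable, then the L-vector space of K-derivations Der_K(L) = Hom_L(Ω_{L/K}, L) is nonzero. -/
/-!
Derivations `L → L` over `K` are the `L`-linear forms on `Ω[L⁄K]`, so they all vanish exactly
when `Ω[L⁄K] = 0`, i.e. when `L/K` is formally unramified; for a finite extension of fields
this is equivalent to separability.
-/

theorem KaehlerDifferential.exists_derivation_ne_zero (R S : Type*) [CommRing R] [Field S]
    [Algebra R S] [Nontrivial Ω[S⁄R]] : ∃ D : Derivation R S S, D ≠ 0 := by
  obtain ⟨ω, hω⟩ := exists_ne (0 : Ω[S⁄R])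
  obtain ⟨φ, hφ⟩ : ∃ φ : Module.Dual S Ω[S⁄R], φ ω ≠ 0 := by
    by_contra! h
    exact hω ((Module.forall_dual_apply_eq_zero_iff S ω).mp h)
  refine ⟨linearMapEquivDerivation R S φ, ?_⟩
  rw [LinearEquiv.map_ne_zero_iff]
  rintro rfl
  exact hφ rfl

theorem stmt9_general {K L : Type*} [Field K] [Field L] [Algebra K L]
    [FiniteDimensional K L]
    (h : ¬ Algebra.IsSeparable K L) :
    ∃ D : Derivation K L L, D ≠ 0 := by
  have : Nontrivial Ω[L⁄K] := not_subsingleton_iff_nontrivial.mp fun hΩ ↦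
    h ((Algebra.FormallyUnramified.iff_isSeparable K L).mp ⟨hΩ⟩)
  exact KaehlerDifferential.exists_derivation_ne_zero K L

/-- If `L/K` is a finite inseparable field extension in characteristic `p > 0`, then
the space of `K`-derivations of `L` is nonzero. -/
theorem stmt9 {K L : Type*} [Field K] [Field L] [Algebra K L]
    [FiniteDimensional K L] (p : ℕ) [Fact p.Prime] [CharP K p]
    (h : ¬ Algebra.IsSeparable K L) :
    ∃ D : Derivation K L L, D ≠ 0 :=
  stmt9_general h
end
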